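/- arXiv:1408.0543 — 6 statements merged into one kernel-verified Lean document; each statement's English description precedes it below -/
import Mathlib

section
/- Let T be a minimal G-tree and (T_n) a sequence of minimal G-trees converging to T in the equivariant Gromov–Hausdorff topology. If g ∈ G fixes a nondegenerate arc in T, then for all sufficiently large n, either g fixes a nondegenerate arc in T_n, or g is hyperbolic in T_n. -/
/-- A (lightweight rendering of an) ℝ-tree: a geodesic metric space satisfying the
four-point (0-hyperbolicity) condition. -/
def IsRTree (X : Type) [MetricSpace X] : Prop :=
  (∀ x y : X, ∀ t : ℝ, 0 ≤ t → t ≤ dist x y →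
      ∃ z : X, dist x z = t ∧ dist z y = dist x y - t) ∧
  (∀ x y z w : X,
      dist x y + dist z w ≤ max (dist x z + dist y w) (dist x w + dist y z))

/-- An ℝ-tree equipped with an isometric action of the group `G`. -/
structure GRTree (G : Type) [Group G] where
  X : Type
  [met : MetricSpace X]
  [act : MulAction G X]
  isom : ∀ (g : G) (x y : X), dist (g • x) (g • y) = dist x y
  tree : IsRTree X

attribute [instance] GRTree.met GRTree.act

namespace GRTree

variable {G : Type} [Group G]

/-- The arc (geodesic segment) between `a` and `b`. -/
def arc (T : GRTree G) (a b : T.X) : Set T.X :=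
  {x | dist a x + dist x b = dist a b}

/-- `g` fixes the set `s` pointwise. -/
def FixesSet (T : GRTree G) (g : G) (s : Set T.X) : Prop :=
  ∀ x ∈ s, g • x = x

/-- The pointwise stabilizer of a subset of the tree. -/
def stabOf (T : GRTree G) (s : Set T.X) : Subgroup G where
  carrier := {g | ∀ x ∈ s, g • x = x}
  one_mem' := fun x _ => one_smul G x
  mul_mem' := by
    intro g h hg hh x hx
    rw [mul_smul, hh x hx, hg x hx]
  inv_mem' := by
    intro g hg x hx
    have h1 : g • x = x := hg x hx
    calc g⁻¹ • x = g⁻¹ • (g • x) := by rw [h1]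
      _ = x := inv_smul_smul g x

/-- Minimality: the only nonempty closed `G`-invariant subtree is the whole tree. -/
def Minimal (T : GRTree G) : Prop :=
  ∀ s : Set T.X, s.Nonempty → (∀ (g : G), ∀ x ∈ s, g • x ∈ s) →
    (∀ x ∈ s, ∀ y ∈ s, ∀ z ∈ T.arc x y, z ∈ s) → IsClosed s → s = Set.univ

/-- `g` is hyperbolic: it fixes no point of the tree. -/
def Hyperbolic (T : GRTree G) (g : G) : Prop := ∀ x : T.X, g • x ≠ x

end GRTree

/-- Equivariant Gromov–Hausdorff convergence of a sequence of `G`-trees: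
for every finite `K ⊆ T`, finite `P ⊆ G` and `ε > 0`, eventually there is a finite
`K' ⊆ Tₙ` and a `P`-equivariant `ε`-relation between `K` and `K'`. -/
def EGHConverges {G : Type} [Group G] (Tn : ℕ → GRTree G) (T : GRTree G) : Prop :=
  ∀ (K : Finset T.X) (P : Finset G) (ε : ℝ), 0 < ε →
    ∀ᶠ n in Filter.atTop,
      ∃ (K' : Finset (Tn n).X) (R : Set (T.X × (Tn n).X)),
        (∀ x ∈ K, ∃ x' ∈ K', (x, x') ∈ R) ∧
        (∀ x' ∈ K', ∃ x ∈ K, (x, x') ∈ R) ∧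
        (∀ x x' y y', (x, x') ∈ R → (y, y') ∈ R → ∀ g ∈ P, ∀ h ∈ P,
          |dist (g • x) (h • y) - dist (g • x') (h • y')| < ε)


section Aux

variable {G : Type} [Group G]

/-- Uniqueness of points on an arc at a given distance from an endpoint. -/
lemma arc_unique (T : GRTree G) (p q z w : T.X)
    (hz : dist p z + dist z q = dist p q) (hw : dist p w + dist w q = dist p q)
    (h : dist p z = dist p w) : z = w := by
  have h4 := T.tree.2 z w p q
  have hle : dist z w ≤ 0 := by
    rcases le_max_iff.mp h4 with h' | h' <;>
      nlinarith [dist_comm p z, dist_comm p w, dist_comm q z, dist_comm q w,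
        dist_comm z p, dist_comm w p, dist_comm z q, dist_comm w q]
  have h0 := dist_nonneg (x := z) (y := w)
  exact dist_eq_zero.mp (le_antisymm hle h0)

/-- A point on `[x,a]` within the Gromov product `(a,b)_x` also lies on `[x,b]`. -/
lemma arc_trans (T : GRTree G) (x a b z : T.X)
    (hz : dist x z + dist z a = dist x a)
    (ht : 2 * dist x z ≤ dist x a + dist x b - dist a b) :
    dist x z + dist z b = dist x b := by
  have h4 := T.tree.2 x a z b
  have tri : dist x b ≤ dist x z + dist z b := dist_triangle x z b
  rcases le_max_iff.mp h4 with h' | h' <;>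
    nlinarith [dist_comm x z, dist_comm z a, dist_comm a z, dist_comm x a,
      dist_comm z b, dist_comm a b, dist_comm x b]

/-- If `g` fixes a point `x` and moves `a` by less than `2 d(x,a)`, then `g`
fixes a nondegenerate arc. -/
lemma key_fix (T : GRTree G) (g : G) (x a : T.X) (hx : g • x = x)
    (hlt : dist a (g • a) < 2 * dist x a) :
    ∃ p q : T.X, p ≠ q ∧ T.FixesSet g (T.arc p q) := by
  have hga : dist x (g • a) = dist x a := by
    calc dist x (g • a) = dist (g • x) (g • a) := by rw [hx]
      _ = dist x a := T.isom g x a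
  have hd0 : (0:ℝ) ≤ dist a (g • a) := dist_nonneg
  obtain ⟨y, hy1, hy2⟩ := T.tree.1 x a (dist x a - dist a (g • a) / 2)
    (by linarith) (by linarith)
  refine ⟨x, y, ?_, ?_⟩
  · intro h
    have h0 : dist x y = 0 := by rw [h, dist_self]
    linarith
  · intro z hz
    have hzxy : dist x z + dist z y = dist x y := hz
    have ht : dist x z ≤ dist x a - dist a (g • a) / 2 := by
      have := dist_nonneg (x := z) (y := y); linarith
    have hza : dist x z + dist z a = dist x a := by
      have h1 : dist z a ≤ dist z y + dist y a := dist_triangle z y a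
      have h2 : dist x a ≤ dist x z + dist z a := dist_triangle x z a
      linarith
    have hzb : dist x z + dist z (g • a) = dist x (g • a) := by
      apply arc_trans T x a (g • a) z hza
      rw [hga]; linarith
    have hgz : dist x (g • z) = dist x z := by
      calc dist x (g • z) = dist (g • x) (g • z) := by rw [hx]
        _ = dist x z := T.isom g x z
    have hgzarc : dist x (g • z) + dist (g • z) (g • a) = dist x (g • a) := by
      rw [hgz, T.isom g z a, hga]; exact hza
    exact arc_unique T x (g • a) (g • z) z hgzarc hzb hgz

end Aux

/-- Let `T` be a minimal `G`-tree and `(Tₙ)` a sequence of minimal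
`G`-trees converging to `T` in the equivariant Gromov–Hausdorff topology.  If `g ∈ G`
fixes a nondegenerate arc in `T`, then for all sufficiently large `n`, either `g`
fixes a nondegenerate arc in `Tₙ`, or `g` is hyperbolic in `Tₙ`. -/
theorem eventually_fixes_arc_or_hyperbolic {G : Type} [Group G] [Countable G]
    (Tn : ℕ → GRTree G) (T : GRTree G)
    (hmin : T.Minimal) (hminn : ∀ n, (Tn n).Minimal)
    (hconv : EGHConverges Tn T) (g : G)
    (hfix : ∃ a b : T.X, a ≠ b ∧ T.FixesSet g (T.arc a b)) :
    ∀ᶠ n in Filter.atTop,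
      (∃ a b : (Tn n).X, a ≠ b ∧ (Tn n).FixesSet g ((Tn n).arc a b)) ∨
        (Tn n).Hyperbolic g := by
  classical
  obtain ⟨a, b, hab, hfx⟩ := hfix
  have hD : 0 < dist a b := dist_pos.mpr hab
  set D := dist a b with hDdef
  have hamem : a ∈ T.arc a b := by simp [GRTree.arc]
  have hbmem : b ∈ T.arc a b := by simp [GRTree.arc, dist_comm]
  have hga : g • a = a := hfx a hamem
  have hgb : g • b = b := hfx b hbmem
  have hconv' := hconv {a, b} {1, g} (D / 4) (by linarith)
  filter_upwards [hconv'] with n hn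
  obtain ⟨K', R, h1, h2, h3⟩ := hn
  obtain ⟨a', -, hRa⟩ := h1 a (by simp)
  obtain ⟨b', -, hRb⟩ := h1 b (by simp)
  have h1mem : (1 : G) ∈ ({1, g} : Finset G) := by simp
  have hgmem : g ∈ ({1, g} : Finset G) := by simp
  have hab' : |dist a b - dist a' b'| < D / 4 := by
    have := h3 a a' b b' hRa hRb 1 h1mem 1 h1mem
    simpa using this
  have hga' : dist (g • a') a' < D / 4 := by
    have := h3 a a' a a' hRa hRa g hgmem 1 h1mem
    simp only [one_smul, hga, dist_self, zero_sub, abs_neg] at this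
    rwa [abs_of_nonneg dist_nonneg] at this
  have hgb' : dist (g • b') b' < D / 4 := by
    have := h3 b b' b b' hRb hRb g hgmem 1 h1mem
    simp only [one_smul, hgb, dist_self, zero_sub, abs_neg] at this
    rwa [abs_of_nonneg dist_nonneg] at this
  have habD : D - D / 4 < dist a' b' := by
    have := abs_lt.mp hab'
    linarith [this.1]
  by_cases hyp : (Tn n).Hyperbolic g
  · exact Or.inr hyp
  · left
    unfold GRTree.Hyperbolic at hyp
    push_neg at hyp
    obtain ⟨x, hx⟩ := hyp
    have htri : dist a' b' ≤ dist a' x + dist x b' := dist_triangle a' x b'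
    rcases le_total (dist x a') (dist x b') with hcase | hcase
    · apply key_fix (Tn n) g x b' hx
      have : dist (g • b') b' = dist b' (g • b') := dist_comm _ _
      have hca : dist a' x = dist x a' := dist_comm _ _
      linarith
    · apply key_fix (Tn n) g x a' hx
      have : dist (g • a') a' = dist a' (g • a') := dist_comm _ _
      have hca : dist a' x = dist x a' := dist_comm _ _
      linarith
end

section
/- Let T be a minimal G-tree and (T_n) a sequence of minimal G-trees converging to T in the equivariant Gromov–Hausdorff topology. Suppose some power g^k of g ∈ G fixes a nondegenerate arc I in T, and that g is hyperbolic in T_n for all sufficiently large n. Then g fixes I pointwise in T. -/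
section AuxLemmas

variable {G : Type} [Group G]

/-- From the four-point condition: if `(u|v)_p = 0` and `(u|w)_p > 0`, then `(v|w)_p = 0`. -/
lemma GRTree.zero_rule (T : GRTree G) (p u v w : T.X)
    (huv : dist u p + dist p v = dist u v)
    (huw : dist u w < dist u p + dist p w) :
    dist v p + dist p w = dist v w := by
  have h4 := T.tree.2 u v p w
  have t1 := dist_triangle v p w
  have c1 := dist_comm v p
  rcases le_max_iff.mp h4 with h | h
  · linarith
  · linarith

/-- Key lemma: a fixed-point-free isometry of an ℝ-tree satisfies
`dist x (g•x) ≤ dist x (g^k • x)` for `k ≥ 1`. -/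
lemma GRTree.key (T : GRTree G) (g : G) (hg : ∀ y : T.X, g • y ≠ y)
    (x : T.X) (k : ℕ) (hk : 1 ≤ k) :
    dist x (g • x) ≤ dist x ((g ^ k) • x) := by
  have hne : x ≠ g • x := fun h => hg x h.symm
  have hd : 0 < dist x (g • x) := dist_pos.mpr hne
  obtain ⟨m, hm1, hm2⟩ := T.tree.1 x (g • x) (dist x (g • x) / 2) (by linarith) (by linarith)
  have hm2' : dist m (g • x) = dist x (g • x) / 2 := by rw [hm2]; ring
  have hL : 0 < dist m (g • m) := dist_pos.mpr (fun h => hg m h.symm)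
  have psmul : ∀ (n : ℕ) (y : T.X), (g ^ (n + 1)) • y = (g ^ n) • (g • y) := fun n y => by
    rw [pow_succ, mul_smul]
  have psmul' : ∀ (n : ℕ) (y : T.X), (g ^ (n + 1)) • y = g • ((g ^ n) • y) := fun n y => by
    rw [pow_succ', mul_smul]
  have pd : ∀ (n : ℕ) (y z : T.X), dist ((g ^ n) • y) ((g ^ n) • z) = dist y z :=
    fun n y z => T.isom (g ^ n) y z
  have fqp : ∀ n : ℕ, dist ((g ^ n) • x) ((g ^ n) • m) = dist x (g • x) / 2 := fun n => by
    rw [pd n x m, hm1]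
  have fpq : ∀ n : ℕ, dist ((g ^ n) • m) ((g ^ (n + 1)) • x) = dist x (g • x) / 2 := fun n => by
    rw [psmul n x, pd n m (g • x), hm2']
  have fpp : ∀ n : ℕ, dist ((g ^ n) • m) ((g ^ (n + 1)) • m) = dist m (g • m) := fun n => by
    rw [psmul n m, pd n m (g • m)]
  -- dist x (g•m) = d/2 + L
  have hF1 : dist x (g • m) = dist x (g • x) / 2 + dist m (g • m) := by
    have h := T.zero_rule m (g • x) x (g • m)
      (by linarith [dist_comm (g • x) m, hm2', dist_comm m x, hm1, dist_comm (g • x) x])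
      (by have e : dist (g • x) (g • m) = dist x m := T.isom g x m
          linarith [e, hm1, dist_comm (g • x) m, hm2', hL])
    linarith [h, hm1]
  have fqp1 : ∀ n : ℕ, dist ((g ^ n) • x) ((g ^ (n + 1)) • m)
      = dist x (g • x) / 2 + dist m (g • m) := fun n => by
    rw [psmul n m, pd n x (g • m), hF1]
  -- the chain of translates of m
  have chain : ∀ n : ℕ,
      dist m ((g ^ n) • m) = (n : ℝ) * dist m (g • m) ∧
      dist m ((g ^ (n + 1)) • m) = ((n : ℝ) + 1) * dist m (g • m) ∧
      dist x ((g ^ (n + 1)) • m) = dist x (g • x) / 2 + ((n : ℝ) + 1) * dist m (g • m) := by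
    intro n
    induction n with
    | zero =>
      refine ⟨by simp, ?_, ?_⟩
      · norm_num [pow_one]
      · norm_num [pow_one, hF1]
    | succ n ih =>
      obtain ⟨hA, hA', hB'⟩ := ih
      have h1 := T.zero_rule ((g ^ (n + 1)) • m) ((g ^ (n + 1)) • x) ((g ^ (n + 1 + 1)) • m) m
        (by linarith [fqp (n + 1), fpp (n + 1), fqp1 (n + 1)])
        (by have tri := dist_triangle ((g ^ (n + 1)) • x) ((g ^ n) • m) m
            have e1 : dist ((g ^ (n + 1)) • x) ((g ^ n) • m) = dist x (g • x) / 2 := by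
              rw [psmul n x, pd n (g • x) m, dist_comm (g • x) m, hm2']
            linarith [tri, e1, dist_comm ((g ^ n) • m) m, hA,
              dist_comm ((g ^ (n + 1)) • m) m, hA', fqp (n + 1), hL])
      have hA2 : dist m ((g ^ (n + 1 + 1)) • m) = ((n : ℝ) + 1 + 1) * dist m (g • m) := by
        linarith [h1, dist_comm ((g ^ (n + 1 + 1)) • m) ((g ^ (n + 1)) • m), fpp (n + 1),
          dist_comm ((g ^ (n + 1)) • m) m, hA', dist_comm ((g ^ (n + 1 + 1)) • m) m]
      have h2 := T.zero_rule ((g ^ (n + 1)) • m) m ((g ^ (n + 1 + 1)) • m) x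
        (by linarith [hA', fpp (n + 1), hA2])
        (by have hn0 : (0 : ℝ) ≤ (n : ℝ) := Nat.cast_nonneg n
            linarith [dist_comm m x, hm1, hA', dist_comm ((g ^ (n + 1)) • m) x, hB', hL,
              mul_nonneg hn0 hL.le])
      have hB2 : dist x ((g ^ (n + 1 + 1)) • m)
          = dist x (g • x) / 2 + ((n : ℝ) + 1 + 1) * dist m (g • m) := by
        linarith [h2, dist_comm ((g ^ (n + 1 + 1)) • m) ((g ^ (n + 1)) • m), fpp (n + 1),
          dist_comm ((g ^ (n + 1)) • m) x, hB', dist_comm ((g ^ (n + 1 + 1)) • m) x]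
      refine ⟨by push_cast; linarith [hA'], by push_cast; linarith [hA2],
        by push_cast; linarith [hB2]⟩
  -- dist m (g^(j+1) • x) = j*L + d/2
  have hM : ∀ j : ℕ, dist m ((g ^ (j + 1)) • x)
      = (j : ℝ) * dist m (g • m) + dist x (g • x) / 2 := by
    intro j
    obtain ⟨hA, hA', _⟩ := chain j
    have h := T.zero_rule ((g ^ j) • m) ((g ^ (j + 1)) • m) m ((g ^ (j + 1)) • x)
      (by linarith [dist_comm ((g ^ (j + 1)) • m) ((g ^ j) • m), fpp j,
          dist_comm ((g ^ j) • m) m, hA, dist_comm ((g ^ (j + 1)) • m) m, hA'])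
      (by have eL : dist ((g ^ (j + 1)) • m) ((g ^ (j + 1)) • x) = dist m x := pd (j + 1) m x
          linarith [eL, dist_comm m x, hm1, dist_comm ((g ^ (j + 1)) • m) ((g ^ j) • m),
            fpp j, fpq j, hL])
    linarith [h, dist_comm m ((g ^ j) • m), hA, fpq j]
  -- dist x (g^(j+1) • x) = d + j*L
  have hE : ∀ j : ℕ, dist x ((g ^ (j + 1)) • x)
      = dist x (g • x) + (j : ℝ) * dist m (g • m) := by
    intro j
    induction j with
    | zero => simp [pow_one]
    | succ j ih =>
      have hMj := hM (j + 1)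
      push_cast at hMj
      have h := T.zero_rule m (g • x) x ((g ^ (j + 1 + 1)) • x)
        (by linarith [dist_comm (g • x) m, hm2', dist_comm m x, hm1, dist_comm (g • x) x])
        (by have e : dist (g • x) ((g ^ (j + 1 + 1)) • x) = dist x ((g ^ (j + 1)) • x) := by
              rw [psmul' (j + 1) x, T.isom g x ((g ^ (j + 1)) • x)]
            linarith [e, ih, dist_comm (g • x) m, hm2', hMj, hL])
      push_cast
      linarith [h, hm1, hMj]
  obtain ⟨j, rfl⟩ : ∃ j, k = j + 1 := ⟨k - 1, (Nat.succ_pred_eq_of_pos hk).symm⟩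
  rw [hE j]
  have : (0 : ℝ) ≤ (j : ℝ) * dist m (g • m) := mul_nonneg (Nat.cast_nonneg j) hL.le
  linarith

end AuxLemmas

/-- Let `T` be a minimal `G`-tree and `(Tₙ)` a sequence of minimal
`G`-trees converging to `T` in the equivariant Gromov–Hausdorff topology.  Suppose a
power `g^k` (`k ≥ 1`) of `g ∈ G` fixes pointwise a nondegenerate arc `I = [a,b]` of
`T`, and that `g` is hyperbolic in `Tₙ` for all sufficiently large `n`.  Then `g`
fixes `I` pointwise in `T`. -/
theorem fixes_arc_of_power_fixes_of_eventually_hyperbolic {G : Type} [Group G]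
    [Countable G] (Tn : ℕ → GRTree G) (T : GRTree G)
    (hmin : T.Minimal) (hminn : ∀ n, (Tn n).Minimal)
    (hconv : EGHConverges Tn T) (g : G) (k : ℕ) (hk : 1 ≤ k)
    (a b : T.X) (hab : a ≠ b) (hfix : T.FixesSet (g ^ k) (T.arc a b))
    (hhyp : ∀ᶠ n in Filter.atTop, (Tn n).Hyperbolic g) :
    T.FixesSet g (T.arc a b) := by
  classical
  intro x hx
  by_contra hne
  have hdpos : 0 < dist x (g • x) := dist_pos.mpr (fun h => hne h.symm)
  have hεpos : 0 < dist x (g • x) / 3 := by linarith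
  have hconv' := hconv {x} ({1, g, g ^ k} : Finset G) (dist x (g • x) / 3) hεpos
  obtain ⟨n, ⟨K', R, hR1, _, hR⟩, hhypn⟩ := (hconv'.and hhyp).exists
  obtain ⟨x', _, hxR⟩ := hR1 x (Finset.mem_singleton_self x)
  have h1mem : (1 : G) ∈ ({1, g, g ^ k} : Finset G) := by simp
  have hgmem : g ∈ ({1, g, g ^ k} : Finset G) := by simp
  have hgkmem : g ^ k ∈ ({1, g, g ^ k} : Finset G) := by simp
  have h1 := hR x x' x x' hxR hxR 1 h1mem g hgmem
  have h2 := hR x x' x x' hxR hxR 1 h1mem (g ^ k) hgkmem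
  simp only [one_smul] at h1 h2
  have hfx : (g ^ k) • x = x := hfix x hx
  rw [hfx, dist_self] at h2
  have h2' : dist x' ((g ^ k) • x') < dist x (g • x) / 3 := by
    have := abs_lt.mp h2
    linarith [this.1, dist_nonneg (x := x') (y := (g ^ k) • x')]
  have hkey := (Tn n).key g (fun y => hhypn y) x' k hk
  have h1' := abs_lt.mp h1
  linarith [h1'.1, h1'.2, hkey, h2']
end

section
/- A limit, in the equivariant Gromov–Hausdorff topology, of a sequence of minimal G-trees with trivial tripod stabilizers again has trivial tripod stabilizers. More precisely: if (T_n) converges to T, each T_n is very small, and g ∈ G fixes pointwise a nondegenerate tripod in T, then g = 1. -/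
namespace GRTree

variable {G : Type} [Group G]

/-- A `G`-tree is very small: arc stabilizers are cyclic, arc stabilizers are closed
under taking roots, and tripod stabilizers are trivial. -/
def VerySmall (T : GRTree G) : Prop :=
  (∀ a b : T.X, a ≠ b → IsCyclic ↥(T.stabOf (T.arc a b))) ∧
  (∀ (g : G) (n : ℕ), 1 ≤ n → g ^ n ≠ 1 → ∀ a b : T.X, a ≠ b →
      T.FixesSet (g ^ n) (T.arc a b) → T.FixesSet g (T.arc a b)) ∧
  (∀ g : G,
    (∃ a b c m : T.X, m ∈ T.arc a b ∧ m ∈ T.arc b c ∧ m ∈ T.arc a c ∧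
        m ≠ a ∧ m ≠ b ∧ m ≠ c ∧
        T.FixesSet g (T.arc a b ∪ T.arc b c ∪ T.arc a c)) → g = 1)

end GRTree

section Aux

variable {G : Type} [Group G] (T : GRTree G)

lemma aux_arc_self (x y : T.X) : x ∈ T.arc x y := by
  simp [GRTree.arc]

lemma aux_arc_self' (x y : T.X) : y ∈ T.arc x y := by
  simp [GRTree.arc]

lemma aux_arc_symm {a b x : T.X} (h : x ∈ T.arc a b) : x ∈ T.arc b a := by
  have h' : dist a x + dist x b = dist a b := h
  show dist b x + dist x a = dist b a
  rw [dist_comm b x, dist_comm x a, dist_comm b a]; linarith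

lemma aux_smul_arc (g : G) {a b x : T.X} (h : x ∈ T.arc a b) :
    g • x ∈ T.arc (g • a) (g • b) := by
  have h' : dist a x + dist x b = dist a b := h
  show dist (g • a) (g • x) + dist (g • x) (g • b) = dist (g • a) (g • b)
  rw [T.isom, T.isom, T.isom]; exact h'

lemma aux_arc_unique {b c x y : T.X} (hx : x ∈ T.arc b c) (hy : y ∈ T.arc b c)
    (h : dist b x = dist b y) : x = y := by
  have hx' : dist b x + dist x c = dist b c := hx
  have hy' : dist b y + dist y c = dist b c := hy
  have h4 := T.tree.2 x y b c
  have e1 : dist x b = dist b x := dist_comm _ _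
  have e2 : dist y b = dist b y := dist_comm _ _
  have hle : dist x y ≤ 0 := by
    rcases le_max_iff.mp h4 with h' | h' <;> linarith
  exact dist_le_zero.mp hle

lemma aux_center_exists (a b c : T.X) :
    ∃ p : T.X, p ∈ T.arc a b ∧ p ∈ T.arc b c ∧ p ∈ T.arc a c ∧
      dist a p = (dist a b + dist a c - dist b c) / 2 ∧
      dist b p = (dist a b + dist b c - dist a c) / 2 ∧
      dist c p = (dist a c + dist b c - dist a b) / 2 := by
  have t1 := dist_triangle a b c
  have t2 := dist_triangle a c b
  have e0 : dist c b = dist b c := dist_comm _ _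
  obtain ⟨p, hp1, hp2⟩ := T.tree.1 b c ((dist a b + dist b c - dist a c) / 2)
    (by linarith) (by linarith)
  have hpb : dist p b = dist b p := dist_comm _ _
  have hpc : dist c p = dist p c := dist_comm _ _
  have h4 := T.tree.2 a p b c
  have tlow : dist a b ≤ dist a p + dist p b := dist_triangle a p b
  have tup : dist a p ≤ (dist a b + dist a c - dist b c) / 2 := by
    rcases le_max_iff.mp h4 with h' | h' <;> linarith
  have hap : dist a p = (dist a b + dist a c - dist b c) / 2 :=
    le_antisymm tup (by linarith)
  refine ⟨p, ?_, ?_, ?_, hap, hp1, ?_⟩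
  · show dist a p + dist p b = dist a b
    linarith
  · show dist b p + dist p c = dist b c
    linarith
  · show dist a p + dist p c = dist a c
    linarith
  · linarith

noncomputable def auxCtr (a b c : T.X) : T.X := (aux_center_exists T a b c).choose

lemma auxCtr_spec (a b c : T.X) :
    auxCtr T a b c ∈ T.arc a b ∧ auxCtr T a b c ∈ T.arc b c ∧
      auxCtr T a b c ∈ T.arc a c ∧
      dist a (auxCtr T a b c) = (dist a b + dist a c - dist b c) / 2 ∧
      dist b (auxCtr T a b c) = (dist a b + dist b c - dist a c) / 2 ∧
      dist c (auxCtr T a b c) = (dist a c + dist b c - dist a b) / 2 :=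
  (aux_center_exists T a b c).choose_spec

lemma aux_center_unique {a b c p q : T.X}
    (hp1 : p ∈ T.arc a b) (hp2 : p ∈ T.arc b c) (hp3 : p ∈ T.arc a c)
    (hq1 : q ∈ T.arc a b) (hq2 : q ∈ T.arc b c) (hq3 : q ∈ T.arc a c) : p = q := by
  have hp1' : dist a p + dist p b = dist a b := hp1
  have hp2' : dist b p + dist p c = dist b c := hp2
  have hp3' : dist a p + dist p c = dist a c := hp3
  have hq1' : dist a q + dist q b = dist a b := hq1
  have hq2' : dist b q + dist q c = dist b c := hq2
  have hq3' : dist a q + dist q c = dist a c := hq3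
  have e1 : dist p b = dist b p := dist_comm _ _
  have e2 : dist q b = dist b q := dist_comm _ _
  exact aux_arc_unique T hp2 hq2 (by linarith)

lemma aux_ctr_eq {a b c p : T.X}
    (h1 : p ∈ T.arc a b) (h2 : p ∈ T.arc b c) (h3 : p ∈ T.arc a c) :
    auxCtr T a b c = p := by
  obtain ⟨g1, g2, g3, -, -, -⟩ := auxCtr_spec T a b c
  exact aux_center_unique T g1 g2 g3 h1 h2 h3

lemma aux_ctr_rot (a b c : T.X) : auxCtr T a b c = auxCtr T b c a := by
  obtain ⟨g1, g2, g3, -, -, -⟩ := auxCtr_spec T b c a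
  exact aux_ctr_eq T (aux_arc_symm T g3) g1 (aux_arc_symm T g2)

lemma aux_ctr_smul (g : G) (a b c : T.X) :
    g • auxCtr T a b c = auxCtr T (g • a) (g • b) (g • c) := by
  obtain ⟨h1, h2, h3, -, -, -⟩ := auxCtr_spec T a b c
  exact (aux_ctr_eq T (aux_smul_arc T g h1) (aux_smul_arc T g h2)
    (aux_smul_arc T g h3)).symm

/-- Apex rigidity: moving the apex by less than its Gromov product with the two
other points does not change the center of the triple. -/
lemma aux_ctr_replace {a a' b c : T.X}
    (h : dist a a' < (dist a b + dist a c - dist b c) / 2) :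
    auxCtr T a b c = auxCtr T a' b c := by
  obtain ⟨h1, h2, h3, hda, hdb, hdc⟩ := auxCtr_spec T a b c
  have h1' : dist a (auxCtr T a b c) + dist (auxCtr T a b c) b = dist a b := h1
  have h3' : dist a (auxCtr T a b c) + dist (auxCtr T a b c) c = dist a c := h3
  have tri : dist a (auxCtr T a b c) ≤ dist a a' + dist a' (auxCtr T a b c) :=
    dist_triangle _ _ _
  have hb : dist a' (auxCtr T a b c) + dist (auxCtr T a b c) b = dist a' b := by
    have h4 := T.tree.2 a' (auxCtr T a b c) a b
    have htri2 : dist a' b ≤ dist a' (auxCtr T a b c) + dist (auxCtr T a b c) b :=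
      dist_triangle _ _ _
    rcases le_max_iff.mp h4 with h' | h'
    · exfalso; linarith [dist_comm a' a, dist_comm (auxCtr T a b c) a]
    · linarith [dist_comm (auxCtr T a b c) a]
  have hc : dist a' (auxCtr T a b c) + dist (auxCtr T a b c) c = dist a' c := by
    have h4 := T.tree.2 a' (auxCtr T a b c) a c
    have htri2 : dist a' c ≤ dist a' (auxCtr T a b c) + dist (auxCtr T a b c) c :=
      dist_triangle _ _ _
    rcases le_max_iff.mp h4 with h' | h'
    · exfalso; linarith [dist_comm a' a, dist_comm (auxCtr T a b c) a]
    · linarith [dist_comm (auxCtr T a b c) a]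
  exact (aux_ctr_eq T hb h2 hc).symm

/-- If `g` moves three sufficiently thick points by less than `ε`, it fixes their
center exactly. -/
lemma aux_ctr_fixed (g : G) (a b c : T.X) (ε : ℝ)
    (hea : dist a (g • a) < ε) (heb : dist b (g • b) < ε) (hec : dist c (g • c) < ε)
    (hpa : 2 * ε ≤ (dist a b + dist a c - dist b c) / 2)
    (hpb : 2 * ε ≤ (dist a b + dist b c - dist a c) / 2)
    (hpc : 2 * ε ≤ (dist a c + dist b c - dist a b) / 2) :
    g • auxCtr T a b c = auxCtr T a b c := by
  rw [aux_ctr_smul]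
  have s1 : auxCtr T (g • a) (g • b) (g • c) = auxCtr T (g • c) (g • a) (g • b) :=
    (aux_ctr_rot T _ _ _).trans (aux_ctr_rot T _ _ _)
  have s2 : auxCtr T (g • c) (g • a) (g • b) = auxCtr T c (g • a) (g • b) := by
    apply aux_ctr_replace
    rw [T.isom g c a, T.isom g c b, T.isom g a b]
    linarith [dist_comm (g • c) c, dist_comm c a, dist_comm c b,
      dist_nonneg (x := c) (y := g • c)]
  have s3 : auxCtr T c (g • a) (g • b) = auxCtr T (g • b) c (g • a) :=
    (aux_ctr_rot T _ _ _).trans (aux_ctr_rot T _ _ _)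
  have s5 : auxCtr T (g • b) c (g • a) = auxCtr T b c (g • a) := by
    apply aux_ctr_replace
    rw [T.isom g b a]
    have t1 : dist b c ≤ dist b (g • b) + dist (g • b) c := dist_triangle _ _ _
    have t2 : dist c (g • a) ≤ dist c a + dist a (g • a) := dist_triangle _ _ _
    linarith [dist_comm (g • b) b, dist_comm b a, dist_comm c a,
      dist_nonneg (x := b) (y := g • b), dist_nonneg (x := a) (y := g • a)]
  have s6 : auxCtr T b c (g • a) = auxCtr T (g • a) b c :=
    (aux_ctr_rot T _ _ _).trans (aux_ctr_rot T _ _ _)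
  have s7 : auxCtr T (g • a) b c = auxCtr T a b c := by
    apply aux_ctr_replace
    have t1 : dist a b ≤ dist a (g • a) + dist (g • a) b := dist_triangle _ _ _
    have t2 : dist a c ≤ dist a (g • a) + dist (g • a) c := dist_triangle _ _ _
    linarith [dist_comm (g • a) a, dist_nonneg (x := a) (y := g • a)]
  exact s1.trans (s2.trans (s3.trans (s5.trans (s6.trans s7))))

/-- If `g` has a fixed point `f`, then the midpoint of `[x, g•x]` (realized as the
center of the triple `(x, g•x, f)`) is a fixed point at distance `dist x (g•x) / 2`
from `x`. -/
lemma aux_mid_fixed (g : G) (f x : T.X) (hf : g • f = f) :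
    ∃ p : T.X, g • p = p ∧ dist x p = dist x (g • x) / 2 := by
  obtain ⟨h1, h2, h3, hd1, hd2, hd3⟩ := auxCtr_spec T x (g • x) f
  have hxf : dist (g • x) f = dist x f := by
    have h := T.isom g x f; rwa [hf] at h
  have hgp : g • auxCtr T x (g • x) f = auxCtr T (g • x) (g • (g • x)) f := by
    rw [aux_ctr_smul, hf]
  obtain ⟨k1, k2, k3, kd1, kd2, kd3⟩ := auxCtr_spec T (g • x) (g • (g • x)) f
  have hd2' : dist (g • x) (auxCtr T x (g • x) f) = dist x (g • x) / 2 := by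
    rw [hd2, hxf]; ring
  have kd1' : dist (g • x) (g • auxCtr T x (g • x) f) = dist x (g • x) / 2 := by
    rw [hgp, kd1, T.isom g x (g • x)]
    have e2 : dist (g • (g • x)) f = dist (g • x) f := by
      have h := T.isom g (g • x) f; rwa [hf] at h
    rw [e2, hxf]; ring
  have hpfix : g • auxCtr T x (g • x) f = auxCtr T x (g • x) f := by
    refine aux_arc_unique T (b := g • x) (c := f) ?_ h2 (by rw [kd1', hd2'])
    rw [hgp]; exact k3
  exact ⟨auxCtr T x (g • x) f, hpfix, by rw [hd1, hxf]; ring⟩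

/-- The arc between two fixed points is pointwise fixed. -/
lemma aux_arc_fixed (g : G) {f1 f2 x : T.X} (h1 : g • f1 = f1) (h2 : g • f2 = f2)
    (hx : x ∈ T.arc f1 f2) : g • x = x := by
  have hgx : g • x ∈ T.arc f1 f2 := by
    have h := aux_smul_arc T g hx; rwa [h1, h2] at h
  have hd : dist f1 (g • x) = dist f1 x := by
    have h := T.isom g f1 x; rwa [h1] at h
  exact aux_arc_unique T hgx hx hd

/-- Comparison of distances under perturbation of endpoints. -/
lemma aux_close {X : Type} [MetricSpace X] {x y x' y' : X} {r : ℝ}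
    (hx : dist x x' ≤ r) (hy : dist y y' ≤ r) :
    |dist x y - dist x' y'| ≤ 2 * r := by
  have t1 := dist_triangle x x' y
  have t2 := dist_triangle x' y' y
  have t3 := dist_triangle x' x y'
  have t4 := dist_triangle x y y'
  rw [abs_sub_le_iff]
  constructor <;> linarith [dist_comm x' x, dist_comm y' y]

end Aux

/-- A limit, in the equivariant Gromov–Hausdorff topology, of a sequence
of minimal very small `G`-trees has trivial tripod stabilizers: if `(Tₙ)` converges to
`T`, each `Tₙ` is very small, and `g ∈ G` fixes pointwise a nondegenerate tripod in
`T` (with endpoints `a, b, c` and center `m` distinct from them), then `g = 1`. -/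
theorem tripod_stabilizer_trivial_of_limit {G : Type} [Group G] [Countable G]
    (Tn : ℕ → GRTree G) (T : GRTree G)
    (hmin : T.Minimal) (hminn : ∀ n, (Tn n).Minimal)
    (hvs : ∀ n, (Tn n).VerySmall)
    (hconv : EGHConverges Tn T) (g : G) (a b c m : T.X)
    (hmab : m ∈ T.arc a b) (hmbc : m ∈ T.arc b c) (hmac : m ∈ T.arc a c)
    (hma : m ≠ a) (hmb : m ≠ b) (hmc : m ≠ c)
    (hfix : T.FixesSet g (T.arc a b ∪ T.arc b c ∪ T.arc a c)) :
    g = 1 := by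
  classical
  -- arc equations for the tripod in T
  have hab : dist a m + dist m b = dist a b := hmab
  have hbc : dist b m + dist m c = dist b c := hmbc
  have hac : dist a m + dist m c = dist a c := hmac
  have ebm : dist b m = dist m b := dist_comm _ _
  have hpA : dist a m = (dist a b + dist a c - dist b c) / 2 := by linarith
  have hpB : dist m b = (dist a b + dist b c - dist a c) / 2 := by linarith
  have hpC : dist m c = (dist a c + dist b c - dist a b) / 2 := by linarith
  have h0A : 0 < dist a m := dist_pos.mpr (Ne.symm hma)
  have h0B : 0 < dist m b := dist_pos.mpr hmb
  have h0C : 0 < dist m c := dist_pos.mpr hmc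
  set δ := min (dist a m) (min (dist m b) (dist m c)) with hδdef
  have hδpos : 0 < δ := lt_min h0A (lt_min h0B h0C)
  have hδA : δ ≤ dist a m := min_le_left _ _
  have hδB : δ ≤ dist m b := le_trans (min_le_right _ _) (min_le_left _ _)
  have hδC : δ ≤ dist m c := le_trans (min_le_right _ _) (min_le_right _ _)
  set ε := δ / 4 with hεdef
  have hεpos : 0 < ε := by positivity
  -- g fixes a, b, c in T
  have hga : g • a = a :=
    hfix a (Set.mem_union_left _ (Set.mem_union_left _ (aux_arc_self T a b)))
  have hgb : g • b = b :=
    hfix b (Set.mem_union_left _ (Set.mem_union_left _ (aux_arc_self' T a b)))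
  have hgc : g • c = c :=
    hfix c (Set.mem_union_left _ (Set.mem_union_right _ (aux_arc_self' T b c)))
  -- extract an approximation from the convergence hypothesis
  obtain ⟨n, K', R, hK, -, hR⟩ := (hconv {a, b, c} {1, g} ε hεpos).exists
  obtain ⟨a', -, hRa⟩ := hK a (by simp)
  obtain ⟨b', -, hRb⟩ := hK b (by simp)
  obtain ⟨c', -, hRc⟩ := hK c (by simp)
  have h1P : (1 : G) ∈ ({1, g} : Finset G) := by simp
  have hgP : g ∈ ({1, g} : Finset G) := by simp
  have dist_est : ∀ (x : T.X) (x' : (Tn n).X) (y : T.X) (y' : (Tn n).X),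
      (x, x') ∈ R → (y, y') ∈ R → |dist x y - dist x' y'| < ε := by
    intro x x' y y' h1 h2
    have h := hR x x' y y' h1 h2 1 h1P 1 h1P
    simpa using h
  have disp_est : ∀ (x : T.X) (x' : (Tn n).X),
      (x, x') ∈ R → g • x = x → dist x' (g • x') < ε := by
    intro x x' h1 hfixx
    have h := hR x x' x x' h1 h1 1 h1P g hgP
    simp only [one_smul, hfixx, dist_self, zero_sub, abs_neg] at h
    rwa [abs_of_nonneg dist_nonneg] at h
  have hea := disp_est a a' hRa hga
  have heb := disp_est b b' hRb hgb
  have hec := disp_est c c' hRc hgc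
  obtain ⟨lab, rab⟩ := abs_lt.mp (dist_est a a' b b' hRa hRb)
  obtain ⟨lac, rac⟩ := abs_lt.mp (dist_est a a' c c' hRa hRc)
  obtain ⟨lbc, rbc⟩ := abs_lt.mp (dist_est b b' c c' hRb hRc)
  -- the Gromov products of a', b', c' are at least 2ε
  have hp1 : 2 * ε ≤ (dist a' b' + dist a' c' - dist b' c') / 2 := by linarith
  have hp2 : 2 * ε ≤ (dist a' b' + dist b' c' - dist a' c') / 2 := by linarith
  have hp3 : 2 * ε ≤ (dist a' c' + dist b' c' - dist a' b') / 2 := by linarith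
  -- the center of a', b', c' is fixed by g
  have hm' : g • auxCtr (Tn n) a' b' c' = auxCtr (Tn n) a' b' c' :=
    aux_ctr_fixed (Tn n) g a' b' c' ε hea heb hec hp1 hp2 hp3
  -- fixed points close to a', b', c'
  obtain ⟨pa, hpa_fix, hpa_d⟩ := aux_mid_fixed (Tn n) g (auxCtr (Tn n) a' b' c') a' hm'
  obtain ⟨pb, hpb_fix, hpb_d⟩ := aux_mid_fixed (Tn n) g (auxCtr (Tn n) a' b' c') b' hm'
  obtain ⟨pc, hpc_fix, hpc_d⟩ := aux_mid_fixed (Tn n) g (auxCtr (Tn n) a' b' c') c' hm'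
  have hapa : dist a' pa ≤ ε / 2 := by rw [hpa_d]; linarith
  have hbpb : dist b' pb ≤ ε / 2 := by rw [hpb_d]; linarith
  have hcpc : dist c' pc ≤ ε / 2 := by rw [hpc_d]; linarith
  obtain ⟨uab, vab⟩ := abs_sub_le_iff.mp (aux_close hapa hbpb)
  obtain ⟨uac, vac⟩ := abs_sub_le_iff.mp (aux_close hapa hcpc)
  obtain ⟨ubc, vbc⟩ := abs_sub_le_iff.mp (aux_close hbpb hcpc)
  -- the fixed points pa, pb, pc form a nondegenerate tripod
  have hq1 : 0 < (dist pa pb + dist pa pc - dist pb pc) / 2 := by linarith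
  have hq2 : 0 < (dist pa pb + dist pb pc - dist pa pc) / 2 := by linarith
  have hq3 : 0 < (dist pa pc + dist pb pc - dist pa pb) / 2 := by linarith
  obtain ⟨j1, j2, j3, jd1, jd2, jd3⟩ := auxCtr_spec (Tn n) pa pb pc
  have hne1 : auxCtr (Tn n) pa pb pc ≠ pa := by
    refine (dist_pos.mp ?_).symm
    rw [jd1]; linarith
  have hne2 : auxCtr (Tn n) pa pb pc ≠ pb := by
    refine (dist_pos.mp ?_).symm
    rw [jd2]; linarith
  have hne3 : auxCtr (Tn n) pa pb pc ≠ pc := by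
    refine (dist_pos.mp ?_).symm
    rw [jd3]; linarith
  have hfixset : (Tn n).FixesSet g
      ((Tn n).arc pa pb ∪ (Tn n).arc pb pc ∪ (Tn n).arc pa pc) := by
    intro x hx
    rcases hx with (hx | hx) | hx
    · exact aux_arc_fixed (Tn n) g hpa_fix hpb_fix hx
    · exact aux_arc_fixed (Tn n) g hpb_fix hpc_fix hx
    · exact aux_arc_fixed (Tn n) g hpa_fix hpc_fix hx
  exact (hvs n).2.2 g
    ⟨pa, pb, pc, auxCtr (Tn n) pa pb pc, j1, j2, j3, hne1, hne2, hne3, hfixset⟩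
end

section
/- For every k ≥ 1, the property of being k-tame is closed under limits: if (T_n) is a sequence of k-tame minimal (G,F)-trees converging (in the equivariant Gromov–Hausdorff topology, equivalently in translation length functions) to a small minimal (G,F)-tree T, then T is k-tame. -/
/-- An element is peripheral (w.r.t. the free factor system `𝓕`) if it is conjugate
into one of the subgroups of `𝓕`. -/
def Peripheral {G : Type} [Group G] (𝓕 : Set (Subgroup G)) (g : G) : Prop :=
  ∃ H ∈ 𝓕, ∃ k : G, k * g * k⁻¹ ∈ H

namespace GRTree

variable {G : Type} [Group G]

/-- A `(G,𝓕)`-tree: every subgroup of the free factor system fixes a unique point. -/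
def IsGFTree (T : GRTree G) (𝓕 : Set (Subgroup G)) : Prop :=
  ∀ H ∈ 𝓕, ∃! x : T.X, ∀ h ∈ H, h • x = x

/-- The tree is small: the pointwise stabilizer of every nondegenerate arc is either
trivial, or cyclic and nonperipheral. -/
def Small (T : GRTree G) (𝓕 : Set (Subgroup G)) : Prop :=
  ∀ a b : T.X, a ≠ b →
    T.stabOf (T.arc a b) = ⊥ ∨
      (IsCyclic ↥(T.stabOf (T.arc a b)) ∧
        ∀ g ∈ T.stabOf (T.arc a b), g ≠ 1 → ¬ Peripheral 𝓕 g)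

/-- The fixed point set of `g`. -/
def Fix (T : GRTree G) (g : G) : Set T.X := {x | g • x = x}

/-- `k`-tameness: the tree is small and `Fix (g^l) ⊆ Fix (g^k)` for every
nonperipheral `g` and every `l ≥ 1`. -/
def KTame (T : GRTree G) (𝓕 : Set (Subgroup G)) (k : ℕ) : Prop :=
  T.Small 𝓕 ∧
    ∀ g : G, ¬ Peripheral 𝓕 g → ∀ l : ℕ, 1 ≤ l → T.Fix (g ^ l) ⊆ T.Fix (g ^ k)

end GRTree

section AuxTreeLemmas

variable {G : Type} [Group G]

/-- Four-point condition in "Gromov product" form. -/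
private lemma grom (T : GRTree G) (w p q r : T.X) :
    min (dist w p + dist w r - dist p r) (dist w q + dist w r - dist q r)
      ≤ dist w p + dist w q - dist p q := by
  have h := T.tree.2 p q r w
  have c1 := dist_comm r w
  have c2 := dist_comm q w
  have c3 := dist_comm p w
  rcases le_max_iff.mp h with h' | h'
  · exact le_trans (min_le_left _ _) (by linarith)
  · exact le_trans (min_le_right _ _) (by linarith)

/-- Two points on a common geodesic `[p,q]` are at distance the difference of their
distances to `p`. -/
private lemma three_point (T : GRTree G) {p q z w : T.X}
    (hz : dist p z + dist z q = dist p q) (hw : dist p w + dist w q = dist p q)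
    (hle : dist p z ≤ dist p w) : dist z w = dist p w - dist p z := by
  have h := T.tree.2 z w p q
  have t1 := dist_triangle p z w
  have c1 := dist_comm z p
  have c2 := dist_comm w p
  rcases le_max_iff.mp h with h' | h'
  · linarith
  · linarith

/-- Existence of medians. -/
private lemma median (T : GRTree G) (x y z : T.X) :
    ∃ m : T.X, dist x m = (dist x y + dist x z - dist y z) / 2 ∧
      dist y m = (dist x y + dist y z - dist x z) / 2 ∧
      dist z m = (dist x z + dist y z - dist x y) / 2 := by
  have ht0 : 0 ≤ (dist x y + dist x z - dist y z) / 2 := by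
    have := dist_triangle y x z
    have := dist_comm y x
    linarith
  have ht1 : (dist x y + dist x z - dist y z) / 2 ≤ dist x y := by
    have := dist_triangle x y z
    linarith
  obtain ⟨m, hm1, hm2⟩ := T.tree.1 x y _ ht0 ht1
  have cym := dist_comm m y
  refine ⟨m, hm1, by linarith, ?_⟩
  have h := T.tree.2 z m x y
  have l1 := dist_triangle z m x
  have l2 := dist_triangle z m y
  have c1 := dist_comm m x
  have c2 := dist_comm z x
  have c3 := dist_comm z y
  have c4 := dist_comm x z
  have c5 := dist_comm y z
  rcases le_max_iff.mp h with h' | h' <;> linarith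

/-- If `h` has a fixed point, then the midpoint of `[y, h•y]` is fixed by `h`. -/
private lemma elliptic_midpoint (T : GRTree G) (h : G) {p : T.X} (hp : h • p = p)
    (y : T.X) : ∃ c : T.X, h • c = c ∧ dist y c = dist y (h • y) / 2 := by
  obtain ⟨m, h1, h2, h3⟩ := median T y (h • y) p
  have e1 : dist (h • y) p = dist y p := by
    have := T.isom h y p; rwa [hp] at this
  have cm1 := dist_comm m (h • y)
  have cm2 := dist_comm m y
  -- m lies on the arc from p to h•y :
  have hm_phy : dist p m + dist m (h • y) = dist p (h • y) := by
    have := dist_comm p m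
    have := dist_comm m (h • y)
    have := dist_comm (h • y) m
    have := dist_comm p (h • y)
    have := dist_comm y p
    linarith
  -- h•m also lies on that arc, at the same distance from p :
  have a1 : dist p (h • m) = dist p m := by
    have := T.isom h p m
    rw [hp] at this
    have := dist_comm p y
    have := dist_comm y p
    -- dist p (h•m) = dist p m
    linarith [this]
  have a2 : dist (h • m) (h • y) = dist m y := T.isom h m y
  have himg : dist p (h • m) + dist (h • m) (h • y) = dist p (h • y) := by
    have := dist_comm m y
    linarith
  have h0 := three_point T hm_phy himg (le_of_eq a1.symm)
  refine ⟨m, ?_, by linarith⟩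
  have : dist m (h • m) = 0 := by linarith
  exact (eq_of_dist_eq_zero this).symm

/-- Dichotomy: if `d(y, h²y) ≤ d(y, hy)` then `h` has a fixed point. -/
private lemma exists_fixed_of_short (T : GRTree G) (h : G) (y : T.X)
    (hle : dist y (h • (h • y)) ≤ dist y (h • y)) : ∃ c : T.X, h • c = c := by
  by_cases hD : dist y (h • y) = 0
  · refine ⟨y, ?_⟩
    have : dist (h • y) y = 0 := by rw [dist_comm]; exact hD
    exact eq_of_dist_eq_zero this
  · have hE0 : 0 ≤ dist y (h • (h • y)) := dist_nonneg
    obtain ⟨m, h1, h2, h3⟩ := median T y (h • y) (h • (h • y))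
    have e1 : dist (h • y) (h • (h • y)) = dist y (h • y) := T.isom h y (h • y)
    obtain ⟨c, hc1, hc2⟩ := T.tree.1 y (h • y) (dist y (h • y) / 2)
      (by linarith [dist_nonneg (x := y) (y := h • y)]) (by linarith [dist_nonneg (x := y) (y := h • y)])
    have cc1 := dist_comm c (h • y)
    have cc2 := dist_comm y c
    have cc3 := dist_comm y (h • y)
    have cc4 := dist_comm m y
    have cc5 := dist_comm m (h • y)
    have cc6 := dist_comm (h • (h • y)) m
    -- c and m lie on the arc from h•y to y
    have hzc : dist (h • y) c + dist c y = dist (h • y) y := by linarith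
    have hzm : dist (h • y) m + dist m y = dist (h • y) y := by linarith
    have hcm := three_point T hzc hzm (by linarith)
    -- c lies on the arc from h•y to h•(h•y)
    have harc : dist (h • y) c + dist c (h • (h • y)) = dist (h • y) (h • (h • y)) := by
      have u1 := dist_triangle c m (h • (h • y))
      have u2 := dist_triangle (h • y) c (h • (h • y))
      have cmm := dist_comm c m
      have := dist_comm m (h • (h • y))
      linarith
    -- so does h•c, at the same distance from h•y
    have b1 : dist (h • y) (h • c) = dist (h • y) c := by
      have := T.isom h y c
      linarith
    have b2 : dist (h • c) (h • (h • y)) = dist c (h • y) := T.isom h c (h • y)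
    have himg : dist (h • y) (h • c) + dist (h • c) (h • (h • y))
        = dist (h • y) (h • (h • y)) := by linarith
    have h0 := three_point T harc himg (le_of_eq b1.symm)
    refine ⟨c, ?_⟩
    have : dist c (h • c) = 0 := by linarith
    exact (eq_of_dist_eq_zero this).symm

private lemma fix_pow {T : GRTree G} {h : G} {p : T.X} (hp : h • p = p) (n : ℕ) :
    (h ^ n) • p = p := by
  induction n with
  | zero => simp
  | succ n ih => rw [pow_succ, mul_smul, hp, ih]

/-- If `d(y,hy) < d(y,h²y)` then displacements of the powers of `h` at `y` grow
linearly. -/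
private lemma displacement_formula (T : GRTree G) (h : G) (y : T.X)
    (hlt : dist y (h • y) < dist y (h • (h • y))) (n : ℕ) :
    dist y ((h ^ (n + 1)) • y) =
      (n : ℝ) * dist y (h • (h • y)) - ((n : ℝ) - 1) * dist y (h • y) := by
  suffices H : ∀ m : ℕ,
      dist y ((h ^ (m + 1)) • y)
        = (m : ℝ) * dist y (h • (h • y)) - ((m : ℝ) - 1) * dist y (h • y) ∧
      dist y ((h ^ (m + 2)) • y)
        = ((m : ℝ) + 1) * dist y (h • (h • y)) - (m : ℝ) * dist y (h • y) by
    exact (H n).1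
  intro m
  induction m with
  | zero =>
    constructor
    · rw [show (0 : ℕ) + 1 = 1 from rfl, pow_one]; push_cast; ring_nf
    · have h2 : (h ^ ((0 : ℕ) + 2)) • y = h • (h • y) := by
        rw [show (0 : ℕ) + 2 = 2 from rfl, pow_two, mul_smul]
      rw [h2]; push_cast; ring_nf
  | succ m ih =>
    obtain ⟨ihA, ihB⟩ := ih
    constructor
    · rw [show m + 1 + 1 = m + 2 from rfl]
      push_cast
      linarith
    · rw [show m + 1 + 2 = m + 3 from rfl]
      have f1 : (h ^ (m + 3)) • y = (h ^ (m + 2)) • (h • y) := by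
        rw [show m + 3 = m + 2 + 1 from rfl, pow_succ, mul_smul]
      have f2 : (h ^ (m + 2)) • y = (h ^ (m + 1)) • (h • y) := by
        rw [show m + 2 = m + 1 + 1 from rfl, pow_succ, mul_smul]
      have f3 : (h ^ (m + 3)) • y = (h ^ (m + 1)) • (h • (h • y)) := by
        rw [show m + 3 = m + 1 + 1 + 1 from rfl, pow_succ, pow_succ, mul_smul, mul_smul]
      have d1 : dist ((h ^ (m + 2)) • y) ((h ^ (m + 3)) • y) = dist y (h • y) := by
        rw [f1]; exact T.isom _ y (h • y)
      have d2 : dist ((h ^ (m + 2)) • y) ((h ^ (m + 1)) • y) = dist y (h • y) := by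
        rw [f2]
        rw [show dist ((h ^ (m + 1)) • (h • y)) ((h ^ (m + 1)) • y) = dist (h • y) y from
          T.isom _ _ _]
        exact dist_comm _ _
      have d3 : dist ((h ^ (m + 3)) • y) ((h ^ (m + 1)) • y) = dist y (h • (h • y)) := by
        rw [f3]
        rw [show dist ((h ^ (m + 1)) • (h • (h • y))) ((h ^ (m + 1)) • y)
            = dist (h • (h • y)) y from T.isom _ _ _]
        exact dist_comm _ _
      have g1 := grom T ((h ^ (m + 2)) • y) y ((h ^ (m + 3)) • y) ((h ^ (m + 1)) • y)
      have g2 := grom T ((h ^ (m + 2)) • y) ((h ^ (m + 3)) • y) ((h ^ (m + 1)) • y) y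
      have c1 := dist_comm y ((h ^ (m + 2)) • y)
      have c2 := dist_comm y ((h ^ (m + 1)) • y)
      have c3 := dist_comm y ((h ^ (m + 3)) • y)
      have c4 := dist_comm ((h ^ (m + 3)) • y) ((h ^ (m + 1)) • y)
      have c5 := dist_comm ((h ^ (m + 3)) • y) y
      have c6 := dist_comm ((h ^ (m + 1)) • y) y
      push_cast
      rcases min_le_iff.mp g1 with hA | hA <;> rcases min_le_iff.mp g2 with hB | hB <;>
        linarith [hA, hB, d1, d2, d3, ihA, ihB, hlt]

/-- Quantitative tameness bound in a `k`-tame tree. -/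
private lemma main_bound (S : GRTree G) (g : G) (k l : ℕ) (hk : 1 ≤ k) (hl : 1 ≤ l)
    (htame : S.Fix (g ^ l) ⊆ S.Fix (g ^ k)) (y : S.X) (ε : ℝ) (hε : 0 < ε)
    (hy : dist y ((g ^ l) • y) < ε) : dist y ((g ^ k) • y) < ((k : ℝ) + 1) * ε := by
  by_cases hell : ∃ p : S.X, (g ^ l) • p = p
  · obtain ⟨p, hp⟩ := hell
    obtain ⟨c, hc, hyc⟩ := elliptic_midpoint S (g ^ l) hp y
    have hck : (g ^ k) • c = c := htame hc
    have hisom : dist ((g ^ k) • c) ((g ^ k) • y) = dist c y := S.isom _ _ _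
    rw [hck] at hisom
    have tri := dist_triangle y c ((g ^ k) • y)
    have hcy := dist_comm c y
    have hk1 : (1 : ℝ) ≤ (k : ℝ) := by exact_mod_cast hk
    nlinarith
  · push_neg at hell
    have hgfix : ∀ p : S.X, ¬ g • p = p := fun p hp => hell p (fix_pow hp l)
    have hlt : dist y (g • y) < dist y (g • (g • y)) := by
      by_contra hcon
      push_neg at hcon
      obtain ⟨c, hc⟩ := exists_fixed_of_short S g y hcon
      exact hgfix c hc
    obtain ⟨l', rfl⟩ : ∃ l', l = l' + 1 := ⟨l - 1, (Nat.succ_pred_eq_of_pos hl).symm⟩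
    obtain ⟨k', rfl⟩ : ∃ k', k = k' + 1 := ⟨k - 1, (Nat.succ_pred_eq_of_pos hk).symm⟩
    have hL := displacement_formula S g y hlt l'
    have hK := displacement_formula S g y hlt k'
    rw [hL] at hy
    rw [hK]
    have hE2D : dist y (g • (g • y)) ≤ 2 * dist y (g • y) := by
      have t := dist_triangle y (g • y) (g • (g • y))
      have i := S.isom g y (g • y)
      linarith
    have hl0 : 0 ≤ (l' : ℝ) * (dist y (g • (g • y)) - dist y (g • y)) :=
      mul_nonneg (Nat.cast_nonneg _) (by linarith)
    have hDe : dist y (g • y) < ε := by nlinarith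
    have hk0 : (k' : ℝ) * (dist y (g • (g • y)) - dist y (g • y)) ≤ (k' : ℝ) * ε :=
      mul_le_mul_of_nonneg_left (by linarith) (Nat.cast_nonneg _)
    push_cast
    nlinarith

end AuxTreeLemmas
/-- For every `k ≥ 1`, being `k`-tame is closed under limits: if `(Tₙ)`
is a sequence of `k`-tame minimal `(G,𝓕)`-trees converging (in the equivariant
Gromov–Hausdorff topology) to a small minimal `(G,𝓕)`-tree `T`, then `T` is `k`-tame. -/
theorem ktame_closed_under_limits {G : Type} [Group G] [Countable G]
    (𝓕 : Set (Subgroup G)) (k : ℕ) (hk : 1 ≤ k)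
    (Tn : ℕ → GRTree G) (T : GRTree G)
    (hGFn : ∀ n, (Tn n).IsGFTree 𝓕) (hminn : ∀ n, (Tn n).Minimal)
    (htame : ∀ n, (Tn n).KTame 𝓕 k)
    (hGF : T.IsGFTree 𝓕) (hmin : T.Minimal) (hsmall : T.Small 𝓕)
    (hconv : EGHConverges Tn T) :
    T.KTame 𝓕 k := by
  classical
  refine ⟨hsmall, ?_⟩
  intro g hg l hl x hx
  have hx' : (g ^ l) • x = x := hx
  show (g ^ k) • x = x
  have key : ∀ δ : ℝ, 0 < δ → dist ((g ^ k) • x) x < δ := by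
    intro δ hδ
    have hk2 : (0 : ℝ) < (k : ℝ) + 2 := by positivity
    set ε := δ / ((k : ℝ) + 2) with hεdef
    have hε : 0 < ε := by positivity
    obtain ⟨n, K', R, h1, h2, h3⟩ :=
      (hconv {x} ({1, g ^ l, g ^ k} : Finset G) ε hε).exists
    obtain ⟨x', hx'K, hR⟩ := h1 x (Finset.mem_singleton_self x)
    have hmem1 : (1 : G) ∈ ({1, g ^ l, g ^ k} : Finset G) := by simp
    have hmeml : g ^ l ∈ ({1, g ^ l, g ^ k} : Finset G) := by simp
    have hmemk : g ^ k ∈ ({1, g ^ l, g ^ k} : Finset G) := by simp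
    have e1 := h3 x x' x x' hR hR (g ^ l) hmeml 1 hmem1
    have e2 := h3 x x' x x' hR hR (g ^ k) hmemk 1 hmem1
    simp only [one_smul] at e1 e2
    have hx0 : dist ((g ^ l) • x) x = 0 := by rw [hx', dist_self]
    rw [hx0, zero_sub, abs_neg, abs_of_nonneg dist_nonneg] at e1
    -- e1 : dist ((g^l) • x') x' < ε
    have hd1 : dist x' ((g ^ l) • x') < ε := by rw [dist_comm]; exact e1
    have hb := main_bound (Tn n) g k l hk hl ((htame n).2 g hg l hl) x' ε hε hd1
    -- hb : dist x' ((g^k) • x') < (k+1) * ε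
    have e2' := (abs_lt.mp e2).2
    have hcomm := dist_comm x' ((g ^ k) • x')
    have hrw : ((k : ℝ) + 2) * ε = δ := by
      rw [hεdef]; field_simp
    nlinarith
  have h0 : dist ((g ^ k) • x) x ≤ 0 := by
    by_contra hpos
    push_neg at hpos
    exact absurd (key _ hpos) (lt_irrefl _)
  exact eq_of_dist_eq_zero (le_antisymm h0 dist_nonneg)
end

section
/- Let T be a small (G,F)-tree, and let p, q, r be branch or inversion points of T, and Λ the subgroup of ℝ generated by distances between branch or inversion points. Then d(p,r) ≡ d(p,q) + d(q,r) (mod 2Λ). -/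
namespace GRTree

variable {G : Type} [Group G]

/-- `y` and `y'` determine the same direction (germ of component of `T ∖ {x}`) at `x`:
the arcs `[x,y]` and `[x,y']` share a nondegenerate initial segment. -/
def SameDir (T : GRTree G) (x y y' : T.X) : Prop :=
  ∃ z : T.X, z ≠ x ∧ z ∈ T.arc x y ∧ z ∈ T.arc x y'

/-- `x` is a branch point: there are at least three directions at `x`. -/
def IsBranch (T : GRTree G) (x : T.X) : Prop :=
  ∃ y₁ y₂ y₃ : T.X, y₁ ≠ x ∧ y₂ ≠ x ∧ y₃ ≠ x ∧
    ¬ T.SameDir x y₁ y₂ ∧ ¬ T.SameDir x y₁ y₃ ∧ ¬ T.SameDir x y₂ y₃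

/-- `x` is an inversion point: it is not a branch point, and some element fixing `x`
swaps the two directions at `x`. -/
def IsInversion (T : GRTree G) (x : T.X) : Prop :=
  ¬ T.IsBranch x ∧
    ∃ (g : G) (y : T.X), g • x = x ∧ y ≠ x ∧ ¬ T.SameDir x y (g • y)

end GRTree

namespace GRTree

variable {G : Type} [Group G]

/-- The translation length of `g` on `T`. -/
noncomputable def tl (T : GRTree G) (g : G) : ℝ := ⨅ x : T.X, dist (g • x) x

/-- `Λ(T)`: the additive subgroup of `ℝ` generated by all distances between branch or
inversion points of `T`. -/
def Lambda (T : GRTree G) : AddSubgroup ℝ :=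
  AddSubgroup.closure {d : ℝ | ∃ p q : T.X,
    (T.IsBranch p ∨ T.IsInversion p) ∧ (T.IsBranch q ∨ T.IsInversion q) ∧
    d = dist p q}

/-- `L(T)`: the additive subgroup of `ℝ` generated by all translation lengths. -/
noncomputable def lengthSubgroup (T : GRTree G) : AddSubgroup ℝ :=
  AddSubgroup.closure (Set.range fun g : G => T.tl g)

end GRTree

/-- Let `T` be a small `(G,𝓕)`-tree, let `p, q, r` be branch or
inversion points of `T`, and `Λ` the subgroup of `ℝ` generated by distances between
branch or inversion points.  Then `d(p,r) ≡ d(p,q) + d(q,r) (mod 2Λ)`. -/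
theorem dist_triangle_mod_two_lambda {G : Type} [Group G] [Countable G]
    (𝓕 : Set (Subgroup G)) (T : GRTree G)
    (hGF : T.IsGFTree 𝓕) (hsmall : T.Small 𝓕)
    (p q r : T.X)
    (hp : T.IsBranch p ∨ T.IsInversion p)
    (hq : T.IsBranch q ∨ T.IsInversion q)
    (hr : T.IsBranch r ∨ T.IsInversion r) :
    dist p r - (dist p q + dist q r) ∈
      T.Lambda.map (AddMonoidHom.mulLeft (2 : ℝ)) := by
  classical
  obtain ⟨hgeo, h4pt⟩ := T.tree
  have hpq := dist_triangle p q r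
  have hqr := dist_triangle q p r
  have hqr' : dist q p = dist p q := dist_comm q p
  have ht0 : 0 ≤ (dist p q + dist p r - dist q r) / 2 := by linarith
  have ht1 : (dist p q + dist p r - dist q r) / 2 ≤ dist p q := by linarith
  obtain ⟨m, hm1, hm2⟩ := hgeo p q _ ht0 ht1
  have hc1 : dist m p = dist p m := dist_comm m p
  have hc2 : dist r q = dist q r := dist_comm r q
  have hc3 : dist r p = dist p r := dist_comm r p
  have hc4 : dist q m = dist m q := dist_comm q m
  -- compute dist m r
  have hmr : dist m r = dist p r - (dist p q + dist p r - dist q r) / 2 := by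
    have hlow : dist p r - (dist p q + dist p r - dist q r) / 2 ≤ dist m r := by
      have := dist_triangle p m r
      linarith
    have h := h4pt m r p q
    rcases le_total (dist m p + dist r q) (dist m q + dist r p) with hc | hc
    · rw [max_eq_right hc] at h; linarith
    · rw [max_eq_left hc] at h; linarith
  -- m lies on all three arcs
  have harcpq : m ∈ T.arc p q := by
    show dist p m + dist m q = dist p q
    linarith
  have harcpr : m ∈ T.arc p r := by
    show dist p m + dist m r = dist p r
    linarith
  have harcqr : m ∈ T.arc q r := by
    show dist q m + dist m r = dist q r
    linarith
  -- arcs from m towards the endpoints of an arc through m meet only at m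
  have key : ∀ a b : T.X, m ∈ T.arc a b → ¬ T.SameDir m a b := by
    rintro a b hab ⟨z, hz, hza, hzb⟩
    have hab' : dist a m + dist m b = dist a b := hab
    have hza' : dist m z + dist z a = dist m a := hza
    have hzb' : dist m z + dist z b = dist m b := hzb
    have h1 := dist_triangle a z b
    have e1 : dist a z = dist z a := dist_comm a z
    have e2 : dist a m = dist m a := dist_comm a m
    have hmz : dist m z ≤ 0 := by linarith
    exact hz (by rw [← dist_eq_zero, dist_comm]; exact le_antisymm hmz dist_nonneg)
  -- m is a branch/inversion point or coincides with p, q, or r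
  have hm : T.IsBranch m ∨ T.IsInversion m := by
    by_cases hmp : m = p
    · rwa [hmp]
    by_cases hmq : m = q
    · rwa [hmq]
    by_cases hmr' : m = r
    · rwa [hmr']
    exact Or.inl ⟨p, q, r, Ne.symm hmp, Ne.symm hmq, Ne.symm hmr',
      key p q harcpq, key p r harcpr, key q r harcqr⟩
  -- conclude
  have hgen : dist q m ∈ T.Lambda :=
    AddSubgroup.subset_closure ⟨q, m, hq, hm, rfl⟩
  refine ⟨-(dist q m), neg_mem hgen, ?_⟩
  show (2 : ℝ) * -(dist q m) = dist p r - (dist p q + dist q r)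
  linarith
end

section
/- Let T be a small (G,F)-tree. Then for any point x ∈ T, the peripheral factors occurring in the Kurosh decomposition of Stab(x) are pairwise non-conjugate in G; that is, if G_i and g G_i g⁻¹ both fix x for some g ∈ G, then g ∈ Stab(x) and the two factors are conjugate inside Stab(x). -/
/-- Let `T` be a small `(G,𝓕)`-tree.  The peripheral factors occurring
in the Kurosh decomposition of a point stabilizer `Stab(x)` are pairwise non-conjugate
in `G`: if `H ∈ 𝓕` and both `H` and `g H g⁻¹` fix `x`, then `g ∈ Stab(x)` (so the two
factors are conjugate inside `Stab(x)`). -/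
theorem peripheral_factors_nonconjugate {G : Type} [Group G] [Countable G]
    (𝓕 : Set (Subgroup G)) (T : GRTree G)
    (hGF : T.IsGFTree 𝓕) (hsmall : T.Small 𝓕)
    (x : T.X) (H : Subgroup G) (hH : H ∈ 𝓕) (g : G)
    (hfix : ∀ h ∈ H, h • x = x)
    (hfix' : ∀ h ∈ H, (g * h * g⁻¹) • x = x) :
    g • x = x := by
  obtain ⟨y, hy, huniq⟩ := hGF H hH
  have h1 : x = y := huniq x hfix
  have h2 : g⁻¹ • x = y := by
    apply huniq
    intro h hh
    have key := hfix' h hh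
    have hgrp : h * g⁻¹ = g⁻¹ * (g * h * g⁻¹) := by group
    calc h • g⁻¹ • x = (g⁻¹ * (g * h * g⁻¹)) • x := by
          rw [← mul_smul, hgrp]
      _ = g⁻¹ • ((g * h * g⁻¹) • x) := by rw [mul_smul]
      _ = g⁻¹ • x := by rw [key]
  have : g⁻¹ • x = x := by rw [h2, ← h1]
  calc g • x = g • (g⁻¹ • x) := by rw [this]
    _ = x := smul_inv_smul g x
end
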